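/- arXiv:2412.07994 — 2 statements merged into one kernel-verified Lean document; each statement's English description precedes it below -/
import Mathlib

section
/- Let G be a group generated by a finite symmetric set, H ≤ G a subgroup, and μ : G → ℝ a finitely supported symmetric probability measure on G (μ ≥ 0, ∑_{g∈G} μ(g) = 1, and μ(g⁻¹) = μ(g) for all g). Then for every n ≥ 1, the probability of return to the coset H after 2n steps satisfies P_{2n}(H,H) = ∑_{h∈H} μ^{(2n)}(h) = ‖μ^{(n)}‖_{(2,1)}², where μ^{(n)} is the n-fold convolution power of μ. -/
open scoped BigOperators

attribute [local instance] Classical.propDecidable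

section Defs

variable {G : Type*} [Group G]

/-- Word length with respect to a generating set `S`. -/
noncomputable def wordLength (S : Set G) (x : G) : ℕ :=
  sInf {n | ∃ l : List G, (∀ s ∈ l, s ∈ S) ∧ l.length = n ∧ l.prod = x}

/-- Convolution of finitely supported functions:
`(f * ϕ) x = ∑ z, f z * ϕ (z⁻¹ * x)`. -/
noncomputable def conv {k : Type*} [Semiring k] (f ϕ : G →₀ k) : G →₀ k :=
  f.sum fun z c => c • Finsupp.mapDomain (fun x => z * x) ϕ

/-- `n`-fold convolution power. -/
noncomputable def convPow {k : Type*} [Semiring k] (f : G →₀ k) : ℕ → G →₀ k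
  | 0 => Finsupp.single 1 1
  | n + 1 => conv f (convPow f n)

/-- ℓ² norm of a finitely supported function. -/
noncomputable def l2Norm {α k : Type*} [NormedAddCommGroup k] (f : α →₀ k) : ℝ :=
  Real.sqrt (∑ x ∈ f.support, ‖f x‖ ^ 2)

/-- ℓ¹ norm of a finitely supported function. -/
noncomputable def l1Norm {α k : Type*} [NormedAddCommGroup k] (f : α →₀ k) : ℝ :=
  ∑ x ∈ f.support, ‖f x‖

/-- The hybrid `(2,1)` norm with respect to the subgroup `H`:
`‖f‖_{(2,1)} = sqrt (∑_{gH ∈ G/H} (∑_{x ∈ gH} |f x|)²)`. -/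
noncomputable def l21Norm (H : Subgroup G) {k : Type*} [NormedAddCommGroup k]
    (f : G →₀ k) : ℝ :=
  l2Norm (Finsupp.mapDomain (QuotientGroup.mk : G → G ⧸ H) (f.mapRange norm norm_zero))

/-- Hybrid operator norm `‖f‖_h`. -/
noncomputable def hybridOpNorm (H : Subgroup G) (f : G →₀ ℂ) : ℝ :=
  sSup {c : ℝ | ∃ ϕ : G →₀ ℂ, l21Norm H ϕ ≤ 1 ∧ c = l21Norm H (conv f ϕ)}

/-- Regular operator norm `‖f‖_*`. -/
noncomputable def regOpNorm (f : G →₀ ℂ) : ℝ :=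
  sSup {c : ℝ | ∃ ξ : G →₀ ℂ, l2Norm ξ ≤ 1 ∧ c = l2Norm (conv f ξ)}

/-- The quasi-regular representation:
`(λ_{G/H}(f) ξ)(gH) = ∑ z, f z * ξ (z⁻¹ g H)`. -/
noncomputable def quasiReg (H : Subgroup G) (f : G →₀ ℂ) (ξ : (G ⧸ H) →₀ ℂ) :
    (G ⧸ H) →₀ ℂ :=
  f.sum fun z c => c • Finsupp.mapDomain (fun q => z • q) ξ

/-- Quasi-regular operator norm `‖λ_{G/H}(f)‖`. -/
noncomputable def quasiRegOpNorm (H : Subgroup G) (f : G →₀ ℂ) : ℝ :=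
  sSup {c : ℝ | ∃ ξ : (G ⧸ H) →₀ ℂ, l2Norm ξ ≤ 1 ∧ c = l2Norm (quasiReg H f ξ)}

/-- Embed a real finitely supported function into the complex valued ones. -/
noncomputable def toC {α : Type*} (f : α →₀ ℝ) : α →₀ ℂ :=
  f.mapRange Complex.ofReal Complex.ofReal_zero

/-- Pointwise weight of a function by `(1 + ℓ)^s`. -/
noncomputable def weight (S : Set G) (s : ℝ) (f : G →₀ ℂ) : G →₀ ℂ where
  support := f.support
  toFun x := ((((1 : ℝ) + (wordLength S x : ℝ)) ^ s : ℝ) : ℂ) * f x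
  mem_support_toFun x := by
    simp only [Finsupp.mem_support_iff]
    have hpos : (0 : ℝ) < ((1 : ℝ) + (wordLength S x : ℝ)) ^ s :=
      Real.rpow_pos_of_pos (by positivity) s
    constructor
    · intro hf h
      rcases mul_eq_zero.mp h with h1 | h2
      · exact hpos.ne' (by exact_mod_cast h1)
      · exact hf h2
    · intro h hf
      exact h (by rw [hf, mul_zero])

/-- The involution `f⋆ x = f x⁻¹`. -/
noncomputable def starFun {k : Type*} [Zero k] (f : G →₀ k) : G →₀ k :=
  Finsupp.equivMapDomain (Equiv.inv G) f

/-- Sum of the values of `g` over the subgroup `H`. -/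
noncomputable def sumOverSubgroup (H : Subgroup G) (g : G →₀ ℝ) : ℝ :=
  ∑ x ∈ g.support.filter (fun x => x ∈ H), g x

/-- `f` is supported in the ball of radius `R` for the word length of `S`. -/
def supportedInBall (S : Set G) (R : ℕ) {k : Type*} [Zero k] (f : G →₀ k) : Prop :=
  ∀ x ∈ f.support, wordLength S x ≤ R

/-- Rapid decay property for the pair `(G, H)`. -/
def PairRD (S : Set G) (H : Subgroup G) : Prop :=
  ∃ C : ℝ, ∃ D : ℕ, 0 ≤ C ∧ ∀ (R : ℕ) (f ϕ : G →₀ ℂ), supportedInBall S R f →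
    l21Norm H (conv f ϕ) ≤ C * ((R : ℝ) + 1) ^ D * l21Norm H f * l21Norm H ϕ

/-- Rapid decay property for the group `G`. -/
def GroupRD (S : Set G) : Prop :=
  ∃ C : ℝ, ∃ D : ℕ, 0 ≤ C ∧ ∀ (R : ℕ) (f ϕ : G →₀ ℂ), supportedInBall S R f →
    l2Norm (conv f ϕ) ≤ C * ((R : ℝ) + 1) ^ D * l2Norm f * l2Norm ϕ

/-- Polynomial growth of a subgroup for the induced length. -/
def polyGrowthSubgroup (S : Set G) (H : Subgroup G) : Prop :=
  ∃ C : ℝ, ∃ D : ℕ, 0 ≤ C ∧ ∀ R : ℕ,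
    (Set.ncard {x : G | x ∈ H ∧ wordLength S x ≤ R} : ℝ) ≤ C * ((R : ℝ) + 1) ^ D

/-- Polynomial growth of the coset space `G/H`. -/
def polyGrowthQuotient (S : Set G) (H : Subgroup G) : Prop :=
  ∃ C : ℝ, ∃ D : ℕ, 0 ≤ C ∧ ∀ R : ℕ,
    (Set.ncard ((QuotientGroup.mk : G → G ⧸ H) '' {x : G | wordLength S x ≤ R}) : ℝ) ≤
      C * ((R : ℝ) + 1) ^ D

/-- Co-amenability of `H` in `G`: Følner condition for the left action on `G/H`. -/
def Coamenable (H : Subgroup G) : Prop :=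
  ∀ ε : ℝ, 0 < ε → ∀ F : Finset G, ∃ V : Finset (G ⧸ H), V.Nonempty ∧
    ((symmDiff (Finset.image₂ (· • ·) F V) V).card : ℝ) ≤ ε * (V.card : ℝ)

/-- Matrix coefficient `⟨λ_{G/H}(γ) ξ, η⟩` of the quasi-regular representation
on `ℓ²(G/H)`. -/
noncomputable def qrCoeff (H : Subgroup G) (γ : G)
    (ξ η : lp (fun _ : G ⧸ H => ℂ) 2) : ℂ :=
  ∑' q : G ⧸ H, ξ (γ⁻¹ • q) * (starRingEnd ℂ) (η q)

/-- The spectral radius of the random walk induced on `G/H`: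
`ρ = limsup P_{2n}(H,H)^{1/(2n)}`. -/
noncomputable def specRadQuot (H : Subgroup G) (μ : G →₀ ℝ) : ℝ :=
  Filter.limsup (fun n : ℕ =>
    (sumOverSubgroup H (convPow μ (2 * n))) ^ ((1 : ℝ) / (2 * (n : ℝ)))) Filter.atTop

end Defs

/-! Write `f = μ⁽ⁿ⁾`, so that `μ⁽²ⁿ⁾ = f * f`; `f` is nonnegative, and symmetric because
`(f * g)⋆ = g⋆ * f⋆`. Summing `f * f` over `H` gives `∑_z f(z) F(z⁻¹H)`, where
`F(gH) = ∑_{x ∈ gH} f(x)`. By symmetry this equals `∑_z f(z) F(zH) = ∑_{gH} F(gH)²`, which is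
`‖f‖²_{(2,1)}` because `f ≥ 0`. -/

section Convolution

variable {G k : Type*} [Group G]

open MonoidAlgebra

lemma conv_eq_coeff_mul [Semiring k] (f g : G →₀ k) :
    conv f g = (ofCoeff f * ofCoeff g).coeff := by
  rw [mul_def, coeff_finsuppSum]
  refine Finsupp.sum_congr fun z _ => ?_
  rw [coeff_finsuppSum, Finsupp.mapDomain, Finsupp.smul_sum]
  refine Finsupp.sum_congr fun x _ => ?_
  rw [coeff_single, Finsupp.smul_single, smul_eq_mul]

lemma conv_apply [Semiring k] (f g : G →₀ k) (x : G) :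
    conv f g x = ∑ z ∈ f.support, f z * g (z⁻¹ * x) := by
  rw [conv_eq_coeff_mul, coeff_mul_apply_left]
  rfl

lemma convPow_eq_coeff_pow [Semiring k] (f : G →₀ k) (n : ℕ) :
    convPow f n = (ofCoeff f ^ n).coeff := by
  induction n with
  | zero => rfl
  | succ n ih => rw [pow_succ', ← ofCoeff_coeff (ofCoeff f ^ n), ← ih, ← conv_eq_coeff_mul]; rfl

lemma convPow_add [Semiring k] (f : G →₀ k) (m n : ℕ) :
    convPow f (m + n) = conv (convPow f m) (convPow f n) := by
  simp only [conv_eq_coeff_mul, convPow_eq_coeff_pow, ofCoeff_coeff, pow_add]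

lemma convPow_one [Semiring k] (f : G →₀ k) : convPow f 1 = f := by
  rw [convPow_eq_coeff_pow, pow_one, coeff_ofCoeff]

lemma convPow_nonneg [Semiring k] [PartialOrder k] [IsOrderedRing k] {f : G →₀ k}
    (hf : ∀ x, 0 ≤ f x) (n : ℕ) (x : G) : 0 ≤ convPow f n x := by
  induction n generalizing x with
  | zero => exact Finsupp.single_nonneg.mpr zero_le_one x
  | succ n ih =>
    rw [convPow, conv_apply]
    exact Finset.sum_nonneg fun z _ => mul_nonneg (hf z) (ih _)

lemma starFun_apply [Zero k] (f : G →₀ k) (x : G) : starFun f x = f x⁻¹ := rfl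

lemma sum_starFun {M : Type*} [Zero k] [AddCommMonoid M] (f : G →₀ k) (φ : G → k → M) :
    (starFun f).sum φ = f.sum fun z c => φ z⁻¹ c := by
  change ∑ z ∈ f.support.map (Equiv.inv G).toEmbedding, _ = _
  rw [Finset.sum_map]
  simp only [Equiv.coe_toEmbedding, Equiv.inv_apply, starFun_apply, inv_inv]
  rfl

lemma starFun_conv [CommSemiring k] (f g : G →₀ k) :
    starFun (conv f g) = conv (starFun g) (starFun f) := by
  ext x
  rw [starFun_apply, conv_apply, conv_eq_coeff_mul, coeff_mul_apply_right, coeff_ofCoeff,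
    sum_starFun]
  refine Finset.sum_congr rfl fun z _ => ?_
  dsimp only
  rw [starFun_apply, inv_inv, mul_inv_rev, mul_comm]

lemma starFun_convPow [CommSemiring k] (f : G →₀ k) (n : ℕ) :
    starFun (convPow f n) = convPow (starFun f) n := by
  induction n with
  | zero => rw [convPow, convPow, starFun, Finsupp.equivMapDomain_single, Equiv.inv_apply, inv_one]
  | succ n ih => rw [convPow, starFun_conv, ih, convPow_add, convPow_one]

end Convolution

section CosetSums

variable {G : Type*} [Group G] (H : Subgroup G)

open Finsupp

lemma mapDomain_mk_apply {k : Type*} [AddCommMonoid k] (f : G →₀ k) (q : G ⧸ H) :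
    mapDomain ((↑) : G → G ⧸ H) f q =
      ∑ x ∈ f.support with (QuotientGroup.mk x : G ⧸ H) = q, f x := by
  rw [mapDomain, Finsupp.sum_apply, Finsupp.sum, Finset.sum_filter]
  exact Finset.sum_congr rfl fun x _ => by rw [single_apply]

lemma sumOverSubgroup_eq_mapDomain_mk (g : G →₀ ℝ) :
    sumOverSubgroup H g = mapDomain ((↑) : G → G ⧸ H) g ((1 : G) : G ⧸ H) := by
  rw [mapDomain_mk_apply, sumOverSubgroup]
  refine Finset.sum_congr (Finset.filter_congr fun x _ => ?_) fun _ _ => rfl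
  rw [eq_comm, QuotientGroup.eq, inv_one, one_mul]

lemma mapDomain_mk_conv_apply {k : Type*} [Semiring k] (f g : G →₀ k) (x : G) :
    mapDomain ((↑) : G → G ⧸ H) (conv f g) (x : G ⧸ H) =
      ∑ z ∈ f.support, f z * mapDomain ((↑) : G → G ⧸ H) g ((z⁻¹ * x : G) : G ⧸ H) := by
  rw [conv, mapDomain_sum, Finsupp.sum, Finset.sum_apply']
  refine Finset.sum_congr rfl fun z _ => ?_
  have hcomm : ((↑) : G → G ⧸ H) ∘ (z * ·) = (z • ·) ∘ ((↑) : G → G ⧸ H) :=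
    funext fun y => (MulAction.Quotient.smul_mk H z y).symm
  rw [mapDomain_smul, Finsupp.smul_apply, smul_eq_mul, ← mapDomain_comp, hcomm, mapDomain_comp]
  have hx : ((x : G) : G ⧸ H) = z • ((z⁻¹ * x : G) : G ⧸ H) := by
    rw [MulAction.Quotient.smul_mk, smul_eq_mul, mul_inv_cancel_left]
  rw [hx, mapDomain_apply (MulAction.injective z)]

lemma sumOverSubgroup_conv (f g : G →₀ ℝ) :
    sumOverSubgroup H (conv f g) =
      f.sum fun z c => c * mapDomain ((↑) : G → G ⧸ H) g ((z⁻¹ : G) : G ⧸ H) := by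
  rw [sumOverSubgroup_eq_mapDomain_mk, mapDomain_mk_conv_apply]
  simp only [mul_one, Finsupp.sum]

lemma sumOverSubgroup_conv_self_of_starFun_eq {f : G →₀ ℝ} (hf : starFun f = f) :
    sumOverSubgroup H (conv f f) =
      ∑ q ∈ (mapDomain ((↑) : G → G ⧸ H) f).support, mapDomain ((↑) : G → G ⧸ H) f q ^ 2 := by
  set F := mapDomain ((↑) : G → G ⧸ H) f
  calc sumOverSubgroup H (conv f f) = (starFun f).sum fun z c => c * F z := by
        rw [sumOverSubgroup_conv, sum_starFun]
    _ = F.sum fun q c => c * F q := by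
        rw [hf, sum_mapDomain_index (fun _ => zero_mul _) (fun _ _ _ => add_mul _ _ _)]
    _ = ∑ q ∈ F.support, F q ^ 2 := by simp only [Finsupp.sum, sq]

lemma l21Norm_sq_of_nonneg {f : G →₀ ℝ} (hf : ∀ x, 0 ≤ f x) :
    l21Norm H f ^ 2 =
      ∑ q ∈ (mapDomain ((↑) : G → G ⧸ H) f).support, mapDomain ((↑) : G → G ⧸ H) f q ^ 2 := by
  have hnorm : f.mapRange norm norm_zero = f := Finsupp.ext fun x => by
    rw [mapRange_apply, Real.norm_of_nonneg (hf x)]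
  rw [l21Norm, hnorm, l2Norm, Real.sq_sqrt (by positivity)]
  simp only [Real.norm_eq_abs, sq_abs]

end CosetSums

theorem statement15_general {G : Type*} [Group G] (H : Subgroup G)
    (μ : G →₀ ℝ) (hpos : ∀ x, 0 ≤ μ x)
    (hsymm : ∀ g : G, μ g⁻¹ = μ g) :
    ∀ n : ℕ, 1 ≤ n →
      sumOverSubgroup H (convPow μ (2 * n)) = (l21Norm H (convPow μ n)) ^ 2 := by
  intro n _
  have hμ : starFun μ = μ := Finsupp.ext hsymm
  rw [two_mul, convPow_add, l21Norm_sq_of_nonneg H (convPow_nonneg hpos n),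
    sumOverSubgroup_conv_self_of_starFun_eq H (by rw [starFun_convPow, hμ])]

/-- for a finitely supported symmetric probability measure `μ`,
the return probability to the coset `H` after `2n` steps satisfies
`P_{2n}(H,H) = ‖μ^{(n)}‖_{(2,1)}²`. -/
theorem statement15 {G : Type*} [Group G] (S : Set G) (hfin : S.Finite)
    (hsym : ∀ s ∈ S, s⁻¹ ∈ S) (hgen : Subgroup.closure S = ⊤) (H : Subgroup G)
    (μ : G →₀ ℝ) (hpos : ∀ x, 0 ≤ μ x) (hsum : ∑ x ∈ μ.support, μ x = 1)
    (hsymm : ∀ g : G, μ g⁻¹ = μ g) :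
    ∀ n : ℕ, 1 ≤ n →
      sumOverSubgroup H (convPow μ (2 * n)) = (l21Norm H (convPow μ n)) ^ 2 :=
  statement15_general H μ hpos hsymm
end

section
/- Let H ≤ K ≤ G be groups, where G is generated by a finite symmetric set S and K is generated by a finite symmetric set T. If the pair (G,H) has the rapid decay property (with respect to the word length of S on G), then the pair (K,H) has the rapid decay property (with respect to the word length of T on K). -/
open scoped BigOperators

attribute [local instance] Classical.propDecidable

/-!
Extend functions on `K` by zero to `G`, i.e. push them forward along the inclusion `K → G`.
This commutes with convolution and preserves the hybrid norm, because
`K ⧸ (H ⊓ K) → G ⧸ H` is injective. Since every generator in `T` is a word of length at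
most `M` in `S`, the `T`-ball of radius `R` lands in the `S`-ball of radius `M R`. So the rapid
decay inequality of `(G, H)` at radius `M R` gives that of `(K, H)` at radius `R`, with the
constant multiplied by `(M + 1) ^ D`.
-/

open Finsupp

section WordLength

variable {G : Type*} [Group G] {S : Set G}

theorem exists_list_prod_eq_of_closure_eq_top (hSsym : ∀ s ∈ S, s⁻¹ ∈ S)
    (hSgen : Subgroup.closure S = ⊤) (x : G) :
    ∃ l : List G, (∀ s ∈ l, s ∈ S) ∧ l.prod = x := by
  have hx : x ∈ (Subgroup.closure S).toSubmonoid := by simp [hSgen]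
  rw [Subgroup.closure_toSubmonoid] at hx
  obtain ⟨l, hl, rfl⟩ := Submonoid.exists_list_of_mem_closure hx
  refine ⟨l, fun s hs => ?_, rfl⟩
  rcases hl s hs with h | h
  · exact h
  · simpa using hSsym _ (Set.mem_inv.mp h)

theorem wordLength_le_length {x : G} {l : List G} (hl : ∀ s ∈ l, s ∈ S) (hprod : l.prod = x) :
    wordLength S x ≤ l.length :=
  Nat.sInf_le ⟨l, hl, rfl, hprod⟩

theorem exists_list_length_eq_wordLength (hSsym : ∀ s ∈ S, s⁻¹ ∈ S)
    (hSgen : Subgroup.closure S = ⊤) (x : G) :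
    ∃ l : List G, (∀ s ∈ l, s ∈ S) ∧ l.length = wordLength S x ∧ l.prod = x := by
  obtain ⟨l, hl, hprod⟩ := exists_list_prod_eq_of_closure_eq_top hSsym hSgen x
  exact Nat.sInf_mem (s := {n | ∃ l : List G, (∀ s ∈ l, s ∈ S) ∧ l.length = n ∧ l.prod = x})
    ⟨l.length, l, hl, rfl, hprod⟩

theorem wordLength_mul_le (hSsym : ∀ s ∈ S, s⁻¹ ∈ S) (hSgen : Subgroup.closure S = ⊤)
    (x y : G) : wordLength S (x * y) ≤ wordLength S x + wordLength S y := by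
  obtain ⟨l₁, hl₁, hlen₁, rfl⟩ := exists_list_length_eq_wordLength hSsym hSgen x
  obtain ⟨l₂, hl₂, hlen₂, rfl⟩ := exists_list_length_eq_wordLength hSsym hSgen y
  rw [← hlen₁, ← hlen₂, ← List.length_append, ← List.prod_append]
  exact wordLength_le_length (fun s hs => (List.mem_append.mp hs).elim (hl₁ s) (hl₂ s)) rfl

theorem wordLength_list_prod_le (hSsym : ∀ s ∈ S, s⁻¹ ∈ S) (hSgen : Subgroup.closure S = ⊤)
    {M : ℕ} (l : List G) (hl : ∀ x ∈ l, wordLength S x ≤ M) :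
    wordLength S l.prod ≤ M * l.length := by
  induction l with
  | nil => simpa using wordLength_le_length (S := S) (l := []) (by simp) rfl
  | cons a l ih =>
    rw [List.forall_mem_cons] at hl
    calc wordLength S (a :: l).prod ≤ wordLength S a + wordLength S l.prod := by
          rw [List.prod_cons]; exact wordLength_mul_le hSsym hSgen a _
      _ ≤ M + M * l.length := add_le_add hl.1 (ih hl.2)
      _ = M * (a :: l).length := by rw [List.length_cons]; ring

theorem exists_wordLength_map_le_mul {K : Type*} [Group K] {T : Set K}
    (hSsym : ∀ s ∈ S, s⁻¹ ∈ S) (hSgen : Subgroup.closure S = ⊤) (hTfin : T.Finite)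
    (hTsym : ∀ t ∈ T, t⁻¹ ∈ T) (hTgen : Subgroup.closure T = ⊤) (φ : K →* G) :
    ∃ M : ℕ, ∀ y : K, wordLength S (φ y) ≤ M * wordLength T y := by
  obtain ⟨M, hM⟩ := (hTfin.image fun t => wordLength S (φ t)).bddAbove
  refine ⟨M, fun y => ?_⟩
  obtain ⟨l, hl, hlen, rfl⟩ := exists_list_length_eq_wordLength hTsym hTgen y
  rw [← hlen, map_list_prod, ← List.length_map (f := φ)]
  refine wordLength_list_prod_le hSsym hSgen _ fun x hx => ?_
  obtain ⟨t, ht, rfl⟩ := List.mem_map.mp hx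
  exact hM ⟨t, hl t ht, rfl⟩

theorem supportedInBall.mapDomain {K : Type*} [Group K] {T : Set K} {k : Type*}
    [AddCommMonoid k] {φ : K → G} {M R : ℕ}
    (hφ : ∀ y, wordLength S (φ y) ≤ M * wordLength T y) {f : K →₀ k}
    (hf : supportedInBall T R f) : supportedInBall S (M * R) (f.mapDomain φ) := by
  intro x hx
  obtain ⟨y, hy, rfl⟩ := Finset.mem_image.mp (mapDomain_support hx)
  exact (hφ y).trans (Nat.mul_le_mul_left _ (hf y hy))

end WordLength

section PushForward

variable {G K : Type*} [Group G] [Group K]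

theorem conv_mapDomain {k : Type*} [Semiring k] (φ : K →* G) (f ϕ : K →₀ k) :
    conv (f.mapDomain φ) (ϕ.mapDomain φ) = (conv f ϕ).mapDomain φ := by
  unfold conv
  rw [mapDomain_sum, sum_mapDomain_index (fun _ => by simp) fun _ _ _ => add_smul _ _ _]
  refine sum_congr fun z _ => ?_
  rw [mapDomain_smul, ← mapDomain_comp, ← mapDomain_comp]
  congr 2
  funext x
  simp

theorem l2Norm_mapDomain_of_injective {α β k : Type*} [NormedAddCommGroup k] {j : α → β}
    (hj : Function.Injective j) (g : α →₀ k) : l2Norm (g.mapDomain j) = l2Norm g := by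
  unfold l2Norm
  rw [mapDomain_support_of_injective hj, Finset.sum_image fun a _ b _ h => hj h]
  simp_rw [mapDomain_apply hj]

theorem mapRange_norm_mapDomain_of_injective {α β k : Type*} [NormedAddCommGroup k]
    {j : α → β} (hj : Function.Injective j) (g : α →₀ k) :
    (g.mapDomain j).mapRange norm norm_zero = (g.mapRange norm norm_zero).mapDomain j := by
  simpa only [embDomain_eq_mapDomain, Function.Embedding.coeFn_mk] using
    (embDomain_mapRange ⟨j, hj⟩ norm g norm_zero).symm

def quotientComapMap (φ : K →* G) (H : Subgroup G) : K ⧸ H.comap φ → G ⧸ H :=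
  Quotient.map' φ fun a b h => by
    rw [QuotientGroup.leftRel_apply] at h ⊢
    simpa using h

theorem quotientComapMap_injective (φ : K →* G) (H : Subgroup G) :
    Function.Injective (quotientComapMap φ H) :=
  Quotient.ind₂' fun a b h => QuotientGroup.eq.mpr <| by
    simpa [Subgroup.mem_comap] using QuotientGroup.eq.mp h

theorem l21Norm_mapDomain_of_injective {φ : K →* G} (hφ : Function.Injective φ)
    (H : Subgroup G) {k : Type*} [NormedAddCommGroup k] (f : K →₀ k) :
    l21Norm H (f.mapDomain φ) = l21Norm (H.comap φ) f := by
  have hmk : (QuotientGroup.mk : G → G ⧸ H) ∘ φ = quotientComapMap φ H ∘ QuotientGroup.mk :=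
    rfl
  unfold l21Norm
  rw [mapRange_norm_mapDomain_of_injective hφ, ← mapDomain_comp, hmk, mapDomain_comp,
    l2Norm_mapDomain_of_injective (quotientComapMap_injective φ H)]

end PushForward

theorem statement18_general {G : Type*} [Group G] (S : Set G)
    (hSsym : ∀ s ∈ S, s⁻¹ ∈ S) (hSgen : Subgroup.closure S = ⊤)
    (K : Subgroup G) (T : Set K) (hTfin : T.Finite)
    (hTsym : ∀ t ∈ T, t⁻¹ ∈ T) (hTgen : Subgroup.closure T = ⊤)
    (H : Subgroup G)
    (hRD : PairRD S H) :
    PairRD T (H.subgroupOf K) := by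
  obtain ⟨M, hM⟩ := exists_wordLength_map_le_mul hSsym hSgen hTfin hTsym hTgen K.subtype
  obtain ⟨C, D, hC, hRD⟩ := hRD
  refine ⟨C * ((M : ℝ) + 1) ^ D, D, by positivity, fun R f ϕ hf => ?_⟩
  have key := hRD (M * R) (f.mapDomain K.subtype) (ϕ.mapDomain K.subtype) (hf.mapDomain hM)
  simp only [conv_mapDomain, l21Norm_mapDomain_of_injective K.subtype_injective] at key
  have hradius : ((M * R : ℕ) : ℝ) + 1 ≤ ((M : ℝ) + 1) * ((R : ℝ) + 1) := by
    push_cast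
    nlinarith [(M.cast_nonneg : (0 : ℝ) ≤ M), (R.cast_nonneg : (0 : ℝ) ≤ R)]
  have hf₀ : 0 ≤ l21Norm (H.subgroupOf K) f := Real.sqrt_nonneg _
  have hϕ₀ : 0 ≤ l21Norm (H.subgroupOf K) ϕ := Real.sqrt_nonneg _
  calc l21Norm (H.subgroupOf K) (conv f ϕ)
      ≤ C * (((M * R : ℕ) : ℝ) + 1) ^ D * l21Norm (H.subgroupOf K) f *
          l21Norm (H.subgroupOf K) ϕ := key
    _ ≤ C * (((M : ℝ) + 1) * ((R : ℝ) + 1)) ^ D * l21Norm (H.subgroupOf K) f *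
          l21Norm (H.subgroupOf K) ϕ := by gcongr
    _ = C * ((M : ℝ) + 1) ^ D * ((R : ℝ) + 1) ^ D * l21Norm (H.subgroupOf K) f *
          l21Norm (H.subgroupOf K) ϕ := by rw [mul_pow]; ring

/-- if `H ≤ K ≤ G` and the pair `(G,H)` has rapid decay, then so
does the pair `(K,H)`. -/
theorem statement18 {G : Type*} [Group G] (S : Set G) (hSfin : S.Finite)
    (hSsym : ∀ s ∈ S, s⁻¹ ∈ S) (hSgen : Subgroup.closure S = ⊤)
    (K : Subgroup G) (T : Set K) (hTfin : T.Finite)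
    (hTsym : ∀ t ∈ T, t⁻¹ ∈ T) (hTgen : Subgroup.closure T = ⊤)
    (H : Subgroup G) (hHK : H ≤ K)
    (hRD : PairRD S H) :
    PairRD T (H.subgroupOf K) :=
  statement18_general S hSsym hSgen K T hTfin hTsym hTgen H hRD
end
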